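/- Fix integers n > 0 and k_0 ≥ 0. Define c_1 = 0 and c_{i} = p^{p^{k_0}·c_{i-1}} + c_{i-1} for 2 ≤ i ≤ n+1, and set b_0 = c_{n+1}. Then the set of integers c with 0 < c < b_0 such that p^{p^{k_0}·c} exactly divides b_0 − c equals {c_2, c_3, …, c_n}. -/

import Mathlib

/-!
The gaps `c_{j+1} - c_j = p^(p^{k₀} c_j)` increase so fast that `b₀ - c_j`, a sum of such
gaps from the `j`-th on, is divisible by `p^(p^{k₀} c_j)` and its remaining terms even by
`p^(p^{k₀} c_j + 1)`; so `p^(p^{k₀} c_j)` divides `b₀ - c_j` exactly. For `c_j < c < c_{j+1}`,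
the number `b₀ - c` is `c_{j+1} - c`, which is positive and less than `p^(p^{k₀} c)`, plus a
multiple of `p^(p^{k₀} c)`, so it is not divisible by `p^(p^{k₀} c)`.
-/

/-- `cseq p k₀ i` is `c_{i+1}` of the paper: `c_1 = 0`, `c_{i+1} = p^(p^{k₀}·c_i) + c_i`. -/
def cseq (p k₀ : ℕ) : ℕ → ℕ
  | 0 => 0
  | i + 1 => p ^ (p ^ k₀ * cseq p k₀ i) + cseq p k₀ i

section

variable {p : ℕ} (k₀ : ℕ)

theorem cseq_succ (i : ℕ) : cseq p k₀ (i + 1) = p ^ (p ^ k₀ * cseq p k₀ i) + cseq p k₀ i := rfl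

@[simp]
theorem cseq_zero : cseq p k₀ 0 = 0 := rfl

@[simp]
theorem cseq_one : cseq p k₀ 1 = 1 := by
  simp [cseq_succ]

theorem cseq_strictMono (hp : 0 < p) : StrictMono (cseq p k₀) :=
  strictMono_nat_of_lt_succ fun i => by
    rw [cseq_succ]
    exact Nat.lt_add_of_pos_left (pow_pos hp _)

theorem exists_cseq_le_lt {c n : ℕ} (h : c < cseq p k₀ n) :
    ∃ j < n, cseq p k₀ j ≤ c ∧ c < cseq p k₀ (j + 1) := by
  induction n with
  | zero => simp at h
  | succ n ih =>
    by_cases hc : c < cseq p k₀ n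
    · obtain ⟨j, hj, hle, hlt⟩ := ih hc
      exact ⟨j, by omega, hle, hlt⟩
    · exact ⟨n, n.lt_succ_self, by omega, h⟩

theorem pow_dvd_cseq_sub (hp : 0 < p) {j n : ℕ} (h : j ≤ n) :
    p ^ (p ^ k₀ * cseq p k₀ j) ∣ cseq p k₀ n - cseq p k₀ j := by
  induction n, h using Nat.le_induction with
  | base => simp
  | succ n hn ih =>
    have hle : cseq p k₀ j ≤ cseq p k₀ n := (cseq_strictMono k₀ hp).monotone hn
    have hsplit : cseq p k₀ (n + 1) - cseq p k₀ j
        = p ^ (p ^ k₀ * cseq p k₀ n) + (cseq p k₀ n - cseq p k₀ j) := by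
      rw [cseq_succ]; omega
    rw [hsplit]
    exact dvd_add (pow_dvd_pow _ (Nat.mul_le_mul_left _ hle)) ih

theorem not_pow_succ_dvd_cseq_sub (hp : 1 < p) {j n : ℕ} (h : j < n) :
    ¬ p ^ (p ^ k₀ * cseq p k₀ j + 1) ∣ cseq p k₀ n - cseq p k₀ j := by
  have hmono := cseq_strictMono k₀ (p := p) (by omega)
  have hexp : p ^ k₀ * cseq p k₀ j + 1 ≤ p ^ k₀ * cseq p k₀ (j + 1) :=
    calc p ^ k₀ * cseq p k₀ j + 1
        ≤ p ^ k₀ * cseq p k₀ j + p ^ k₀ := by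
          have := Nat.one_le_pow k₀ p (by omega); omega
      _ = p ^ k₀ * (cseq p k₀ j + 1) := by ring
      _ ≤ p ^ k₀ * cseq p k₀ (j + 1) := Nat.mul_le_mul_left _ (hmono j.lt_succ_self)
  have htail : p ^ (p ^ k₀ * cseq p k₀ j + 1) ∣ cseq p k₀ n - cseq p k₀ (j + 1) :=
    (pow_dvd_pow _ hexp).trans (pow_dvd_cseq_sub k₀ (by omega) h)
  have hsplit : cseq p k₀ n - cseq p k₀ j
      = p ^ (p ^ k₀ * cseq p k₀ j) + (cseq p k₀ n - cseq p k₀ (j + 1)) := by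
    have := hmono.monotone h
    rw [cseq_succ] at this ⊢; omega
  rw [hsplit, Nat.dvd_add_left htail, Nat.pow_dvd_pow_iff_le_right hp]
  omega

theorem not_pow_dvd_cseq_sub_of_lt_of_lt (hp : 0 < p) {c j n : ℕ} (hjn : j < n)
    (hjc : cseq p k₀ j < c) (hcj : c < cseq p k₀ (j + 1)) :
    ¬ p ^ (p ^ k₀ * c) ∣ cseq p k₀ n - c := by
  intro hdvd
  have htail : p ^ (p ^ k₀ * c) ∣ cseq p k₀ n - cseq p k₀ (j + 1) :=
    (pow_dvd_pow _ (Nat.mul_le_mul_left _ hcj.le)).trans (pow_dvd_cseq_sub k₀ hp hjn)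
  have hsplit : cseq p k₀ n - c = (cseq p k₀ (j + 1) - c) + (cseq p k₀ n - cseq p k₀ (j + 1)) := by
    have := (cseq_strictMono k₀ hp).monotone (show j + 1 ≤ n from hjn); omega
  rw [hsplit, Nat.dvd_add_left htail] at hdvd
  have hgap : cseq p k₀ (j + 1) - c < p ^ (p ^ k₀ * c) :=
    calc cseq p k₀ (j + 1) - c
        < p ^ (p ^ k₀ * cseq p k₀ j) := by have := cseq_succ k₀ (p := p) j; omega
      _ ≤ p ^ (p ^ k₀ * c) := Nat.pow_le_pow_right hp (Nat.mul_le_mul_left _ hjc.le)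
  exact absurd (Nat.le_of_dvd (by omega) hdvd) (by omega)

end

theorem exact_divisor_set_general (p : ℕ) (hp : p.Prime) (n k₀ : ℕ) :
    {c : ℕ | 0 < c ∧ c < cseq p k₀ n ∧
        p ^ (p ^ k₀ * c) ∣ (cseq p k₀ n - c) ∧ ¬ p ^ (p ^ k₀ * c + 1) ∣ (cseq p k₀ n - c)} =
      {c : ℕ | ∃ i, 2 ≤ i ∧ i ≤ n ∧ c = cseq p k₀ (i - 1)} := by
  have hmono := cseq_strictMono k₀ hp.pos
  ext c
  constructor
  · rintro ⟨hc0, hcn, hdvd, -⟩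
    obtain ⟨j, hjn, hle, hlt⟩ := exists_cseq_le_lt k₀ hcn
    have hceq : c = cseq p k₀ j := by
      by_contra hne
      exact not_pow_dvd_cseq_sub_of_lt_of_lt k₀ hp.pos hjn (hle.lt_of_ne' hne) hlt hdvd
    have hj : j ≠ 0 := by rintro rfl; simp only [zero_add, cseq_one] at hlt; omega
    exact ⟨j + 1, by omega, hjn, by simpa using hceq⟩
  · rintro ⟨i, hi, hin, rfl⟩
    have hpos : 0 < cseq p k₀ (i - 1) := by simpa using hmono (show 0 < i - 1 by omega)
    exact ⟨hpos, hmono (by omega), pow_dvd_cseq_sub k₀ hp.pos (by omega),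
      not_pow_succ_dvd_cseq_sub k₀ hp.one_lt (by omega)⟩

theorem exact_divisor_set (p : ℕ) (hp : p.Prime) (n k₀ : ℕ) (hn : 0 < n) :
    {c : ℕ | 0 < c ∧ c < cseq p k₀ n ∧
        p ^ (p ^ k₀ * c) ∣ (cseq p k₀ n - c) ∧ ¬ p ^ (p ^ k₀ * c + 1) ∣ (cseq p k₀ n - c)} =
      {c : ℕ | ∃ i, 2 ≤ i ∧ i ≤ n ∧ c = cseq p k₀ (i - 1)} :=
  exact_divisor_set_general p hp n k₀
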